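/- arXiv:0707.3515 — 2 statements merged into one kernel-verified Lean document; each statement's English description precedes it below -/
import Mathlib

section
/- Let f(r) = r²/ℓ² − bℓ/r + λ²ℓ²/r² with ℓ, b, λ > 0. Then f has a positive root (i.e. the black string has a horizon) if and only if the charge parameter satisfies λ² ≤ (3/4)·(b/ (4^{1/3}))^{4/3}·4^{1/3}, equivalently the dimensionless parameter q² = λ²/b^{4/3} satisfies 4q²/3 ≤ (1/4)^{1/3}; in particular if 4(4q²/3)³ ≤ 1 then f(r) = 0 has a positive real solution. -/
/-!
Clearing denominators, `f(r) = 0` with `r > 0` becomes `r⁴ - bℓ³ r + λ²ℓ⁴ = 0`.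
Writing `bℓ³ = 4x³` with `x = ℓ (b/4)^{1/3} > 0`, the identity
`r⁴ - 4x³ r + 3x⁴ = (r - x)²((r + x)² + 2x²)` shows that `r ↦ r⁴ - 4x³ r` attains its minimum
`-3x⁴` at `x`, so by the intermediate value theorem the quartic has a positive root exactly when
`λ²ℓ⁴ ≤ 3x⁴`, which unwinds to `4q²/3 ≤ (1/4)^{1/3}`.
-/

open Real

lemma pow_four_sub_mul_add_nonneg (x r : ℝ) : 0 ≤ r ^ 4 - 4 * x ^ 3 * r + 3 * x ^ 4 := by
  have h : r ^ 4 - 4 * x ^ 3 * r + 3 * x ^ 4 = (r - x) ^ 2 * ((r + x) ^ 2 + 2 * x ^ 2) := by ring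
  rw [h]
  positivity

lemma exists_pos_root_quartic_iff {x : ℝ} (hx : 0 < x) (d : ℝ) :
    (∃ r : ℝ, 0 < r ∧ r ^ 4 - 4 * x ^ 3 * r + d = 0) ↔ d ≤ 3 * x ^ 4 := by
  constructor
  · rintro ⟨r, -, hr⟩
    linarith [pow_four_sub_mul_add_nonneg x r]
  · intro hd
    set g : ℝ → ℝ := fun r ↦ r ^ 4 - 4 * x ^ 3 * r + d
    set R := 1 + 4 * x ^ 3 + |d|
    have hR : 1 ≤ R := by unfold R; linarith [abs_nonneg d, pow_pos hx 3]
    have hgx : g x ≤ 0 := by simp only [g]; linarith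
    have hgR : 0 ≤ g R := by
      have hR4 : R ^ 2 ≤ R ^ 4 := pow_le_pow_right₀ hR (by norm_num)
      simp only [g]
      nlinarith [neg_abs_le d, mul_nonneg (abs_nonneg d) (sub_nonneg.mpr hR)]
    obtain ⟨r, hr, hgr⟩ := intermediate_value_uIcc (a := x) (b := R) (by fun_prop)
      (Set.mem_uIcc_of_le hgx hgR)
    exact ⟨r, (lt_min hx (by linarith)).trans_le hr.1, hgr⟩

lemma rpow_one_div_three_pow_three {a : ℝ} (ha : 0 ≤ a) : (a ^ ((1 : ℝ) / 3)) ^ 3 = a := by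
  rw [one_div]
  exact_mod_cast rpow_inv_natCast_pow ha (n := 3) (by norm_num)

lemma rpow_four_div_three {a : ℝ} (ha : 0 ≤ a) : a ^ ((4 : ℝ) / 3) = (a ^ ((1 : ℝ) / 3)) ^ 4 := by
  rw [← rpow_natCast, ← rpow_mul ha]
  norm_num

lemma black_string_metric_eq_zero_iff {ℓ r : ℝ} (hℓ : ℓ ≠ 0) (hr : r ≠ 0) (b lam : ℝ) :
    r ^ 2 / ℓ ^ 2 - b * ℓ / r + lam ^ 2 * ℓ ^ 2 / r ^ 2 = 0 ↔
      r ^ 4 - b * ℓ ^ 3 * r + lam ^ 2 * ℓ ^ 4 = 0 := by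
  have h : r ^ 2 / ℓ ^ 2 - b * ℓ / r + lam ^ 2 * ℓ ^ 2 / r ^ 2 =
      (r ^ 4 - b * ℓ ^ 3 * r + lam ^ 2 * ℓ ^ 4) / (r ^ 2 * ℓ ^ 2) := by
    field_simp
  rw [h, div_eq_zero_iff]
  simp [hℓ, hr]

theorem black_string_horizon_existence_general (ℓ b lam : ℝ)
    (hℓ : 0 < ℓ) (hb : 0 < b) :
    ((∃ r : ℝ, 0 < r ∧ r ^ 2 / ℓ ^ 2 - b * ℓ / r + lam ^ 2 * ℓ ^ 2 / r ^ 2 = 0) ↔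
      4 * (lam ^ 2 / b ^ ((4 : ℝ) / 3)) / 3 ≤ ((1 : ℝ) / 4) ^ ((1 : ℝ) / 3)) ∧
    (4 * (4 * (lam ^ 2 / b ^ ((4 : ℝ) / 3)) / 3) ^ 3 ≤ 1 →
      ∃ r : ℝ, 0 < r ∧ r ^ 2 / ℓ ^ 2 - b * ℓ / r + lam ^ 2 * ℓ ^ 2 / r ^ 2 = 0) := by
  set β := b ^ ((1 : ℝ) / 3)
  set κ := ((1 : ℝ) / 4) ^ ((1 : ℝ) / 3)
  have hβ : 0 < β := by positivity
  have hκ : 0 < κ := by positivity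
  have hβ3 : β ^ 3 = b := rpow_one_div_three_pow_three hb.le
  have hκ3 : κ ^ 3 = 1 / 4 := rpow_one_div_three_pow_three (by norm_num)
  rw [rpow_four_div_three hb.le]
  have hroot : (∃ r : ℝ, 0 < r ∧ r ^ 2 / ℓ ^ 2 - b * ℓ / r + lam ^ 2 * ℓ ^ 2 / r ^ 2 = 0) ↔
      4 * (lam ^ 2 / β ^ 4) / 3 ≤ κ := by
    have hc : b * ℓ ^ 3 = 4 * (ℓ * β * κ) ^ 3 := by
      rw [mul_pow, mul_pow, hβ3, hκ3]; ring
    have hd : 3 * (ℓ * β * κ) ^ 4 = ℓ ^ 4 * (3 * β ^ 4 * κ / 4) := by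
      linear_combination 3 * ℓ ^ 4 * β ^ 4 * κ * hκ3
    calc _ ↔ ∃ r : ℝ, 0 < r ∧ r ^ 4 - 4 * (ℓ * β * κ) ^ 3 * r + lam ^ 2 * ℓ ^ 4 = 0 :=
          exists_congr fun r ↦ and_congr_right fun hr ↦ by
            rw [black_string_metric_eq_zero_iff hℓ.ne' hr.ne', hc]
      _ ↔ lam ^ 2 * ℓ ^ 4 ≤ 3 * (ℓ * β * κ) ^ 4 := exists_pos_root_quartic_iff (by positivity) _
      _ ↔ 4 * (lam ^ 2 / β ^ 4) / 3 ≤ κ := by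
          rw [hd, mul_comm _ (ℓ ^ 4), mul_le_mul_iff_right₀ (by positivity), mul_div_assoc',
            div_div, div_le_iff₀ (by positivity), le_div_iff₀ (by norm_num)]
          constructor <;> intro h <;> linarith
  refine ⟨hroot, fun hq ↦ hroot.mpr (le_of_pow_le_pow_left₀ three_ne_zero hκ.le ?_)⟩
  rw [hκ3]
  linarith

/-- the metric function f(r) = r²/ℓ² − bℓ/r + λ²ℓ²/r² of the
four-dimensional charged rotating black string (ℓ, b, λ > 0) has a positive
root if and only if the dimensionless charge parameter q² = λ²/b^{4/3}
satisfies 4q²/3 ≤ (1/4)^{1/3}; in particular if 4(4q²/3)³ ≤ 1 then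
f(r) = 0 has a positive real solution. -/
theorem black_string_horizon_existence (ℓ b lam : ℝ)
    (hℓ : 0 < ℓ) (hb : 0 < b) (hlam : 0 < lam) :
    ((∃ r : ℝ, 0 < r ∧ r ^ 2 / ℓ ^ 2 - b * ℓ / r + lam ^ 2 * ℓ ^ 2 / r ^ 2 = 0) ↔
      4 * (lam ^ 2 / b ^ ((4 : ℝ) / 3)) / 3 ≤ ((1 : ℝ) / 4) ^ ((1 : ℝ) / 3)) ∧
    (4 * (4 * (lam ^ 2 / b ^ ((4 : ℝ) / 3)) / 3) ^ 3 ≤ 1 →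
      ∃ r : ℝ, 0 < r ∧ r ^ 2 / ℓ ^ 2 - b * ℓ / r + lam ^ 2 * ℓ ^ 2 / r ^ 2 = 0) :=
  black_string_horizon_existence_general ℓ b lam hℓ hb
end

section
/- Define, for Ξ ≥ 1, r₊ > 0, q, ℓ > 0, n ≥ 3, a, and V > 0: m = r₊ⁿ/ℓ² + q²/r₊^{n−2}, M = (V/16π)·m·(nΞ² − 1), S = (ΞV/4)·r₊^{n−1}, J = (V/16π)·nΞ·m·a (single rotation parameter, with Ξ² = 1 + a²/ℓ²), Q = (ΞV/4π)·√((n−1)(n−2)/2)·q, T = (n r₊^{2n−2} − (n−2)q²ℓ²)/(4πℓ²Ξ r₊^{2n−3}), Ω = a/(Ξℓ²), Φ = √((n−1)/(2(n−2)))·q/(Ξ r₊^{n−2}). Then the differential first law dM = T dS + Ω dJ + Φ dQ holds: regarding M, S, J, Q as smooth functions of the parameters (r₊, a, q), the 1-form dM − T dS − Ω dJ − Φ dQ vanishes identically. -/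
noncomputable def Xi (ℓ a : ℝ) : ℝ := Real.sqrt (1 + a ^ 2 / ℓ ^ 2)

noncomputable def mMass (n : ℕ) (ℓ r q : ℝ) : ℝ := r ^ n / ℓ ^ 2 + q ^ 2 / r ^ (n - 2)

noncomputable def Mmass (n : ℕ) (ℓ V r a q : ℝ) : ℝ :=
  V / (16 * Real.pi) * mMass n ℓ r q * ((n : ℝ) * (Xi ℓ a) ^ 2 - 1)

noncomputable def Sent (n : ℕ) (ℓ V r a : ℝ) : ℝ := Xi ℓ a * V / 4 * r ^ (n - 1)

noncomputable def Jang (n : ℕ) (ℓ V r a q : ℝ) : ℝ :=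
  V / (16 * Real.pi) * (n : ℝ) * Xi ℓ a * mMass n ℓ r q * a

noncomputable def Qch (n : ℕ) (ℓ V a q : ℝ) : ℝ :=
  Xi ℓ a * V / (4 * Real.pi) * Real.sqrt (((n : ℝ) - 1) * ((n : ℝ) - 2) / 2) * q

noncomputable def Temp (n : ℕ) (ℓ r a q : ℝ) : ℝ :=
  ((n : ℝ) * r ^ (2 * n - 2) - ((n : ℝ) - 2) * q ^ 2 * ℓ ^ 2) /
    (4 * Real.pi * ℓ ^ 2 * Xi ℓ a * r ^ (2 * n - 3))

noncomputable def Omg (ℓ a : ℝ) : ℝ := a / (Xi ℓ a * ℓ ^ 2)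

noncomputable def Pot (n : ℕ) (ℓ r a q : ℝ) : ℝ :=
  Real.sqrt (((n : ℝ) - 1) / (2 * ((n : ℝ) - 2))) * q / (Xi ℓ a * r ^ (n - 2))


/-!
Each component of the first law is an algebraic identity between explicit derivatives.
Since `Ξ² = 1 + a²/ℓ²`, one has `dΞ/da = Ω` and `Ξ (Ξ - Ω a) = 1`, so in the `r₊`- and
`q`-components the `M` and `Ω J` terms combine to `(n - 1) V/(16π)` times the derivative of `m`.
The temperature is `∂m/∂r₊ / (4π Ξ r₊^(n-2))`, which gives the `r₊`-component; the charge
constants multiply to `√((n-1)(n-2)/2) √((n-1)/(2(n-2))) = (n-1)/2`, which gives the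
`q`-component; and after division by `Ω` the `a`-component is the Smarr-type relation
`Ξ (4π T r₊^(n-1) + 4 √((n-1)(n-2)/2) Φ q) = n m`.
-/

open Real

section Rotation

variable (ℓ a : ℝ)

lemma Xi_sq : Xi ℓ a ^ 2 = 1 + a ^ 2 / ℓ ^ 2 := sq_sqrt (by positivity)

lemma Xi_pos : 0 < Xi ℓ a := sqrt_pos.2 (by positivity)

lemma hasDerivAt_Xi : HasDerivAt (Xi ℓ) (Omg ℓ a) a := by
  have h := (((hasDerivAt_pow 2 a).div_const (ℓ ^ 2)).const_add 1).sqrt (by positivity)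
  refine HasDerivAt.congr_deriv (f := Xi ℓ) h ?_
  change _ / (2 * Xi ℓ a) = a / (Xi ℓ a * ℓ ^ 2)
  field_simp [(Xi_pos ℓ a).ne']
  ring

lemma Xi_mul_sub_Omg_mul : Xi ℓ a * (Xi ℓ a - Omg ℓ a * a) = 1 := by
  have h : Omg ℓ a * Xi ℓ a = a / ℓ ^ 2 := by
    rw [Omg, mul_comm (Xi ℓ a), ← div_div, div_mul_cancel₀ _ (Xi_pos ℓ a).ne']
  linear_combination Xi_sq ℓ a - a * h

end Rotation

lemma sqrt_mul_sqrt_eq_half {x : ℝ} (hx : 2 < x) :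
    √((x - 1) * (x - 2) / 2) * √((x - 1) / (2 * (x - 2))) = (x - 1) / 2 := by
  rw [← sqrt_mul (by nlinarith), ← sqrt_sq (by linarith : 0 ≤ (x - 1) / 2)]
  congr 1
  field_simp [(by linarith : x - 2 ≠ 0)]

section Radius

variable {n : ℕ} (ℓ : ℝ) {r : ℝ} (a q : ℝ)

lemma hasDerivAt_mMass_radius (hn : 2 ≤ n) (hr : r ≠ 0) :
    HasDerivAt (fun r => mMass n ℓ r q)
      (n * r ^ (n - 1) / ℓ ^ 2 - (n - 2) * q ^ 2 / r ^ (n - 1)) r := by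
  obtain ⟨k, rfl⟩ := Nat.exists_eq_add_of_le' hn
  have h := ((hasDerivAt_pow (k + 2) r).div_const (ℓ ^ 2)).add
    ((hasDerivAt_pow k r).inv (pow_ne_zero _ hr) |>.const_mul (q ^ 2))
  refine HasDerivAt.congr_deriv (f := fun r => mMass (k + 2) ℓ r q) h ?_
  rcases k with _ | k
  · simp
  · simp only [show k + 1 + 2 - 1 = k + 2 by omega, add_tsub_cancel_right]
    push_cast
    field_simp
    ring

lemma Xi_mul_Temp_mul_pow (hn : 2 ≤ n) (hℓ : ℓ ≠ 0) (hr : r ≠ 0) :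
    Xi ℓ a * Temp n ℓ r a q * r ^ (n - 2) =
      (n * r ^ (n - 1) / ℓ ^ 2 - (n - 2) * q ^ 2 / r ^ (n - 1)) / (4 * π) := by
  obtain ⟨k, rfl⟩ := Nat.exists_eq_add_of_le' hn
  simp only [Temp, Nat.add_sub_cancel, show k + 2 - 1 = k + 1 by omega,
    show 2 * (k + 2) - 2 = 2 * k + 2 by omega, show 2 * (k + 2) - 3 = 2 * k + 1 by omega]
  have := Xi_pos ℓ a
  field_simp
  ring

end Radius

lemma Xi_mul_sqrt_mul_Pot {n : ℕ} (hn : 3 ≤ n) (ℓ r a q : ℝ) :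
    Xi ℓ a * √(((n : ℝ) - 1) * ((n : ℝ) - 2) / 2) * Pot n ℓ r a q =
      (n - 1) / 2 * q / r ^ (n - 2) := by
  have hn' : (2 : ℝ) < n := by exact_mod_cast hn
  rw [Pot, mul_assoc, ← mul_div_assoc, ← mul_assoc (√_), sqrt_mul_sqrt_eq_half hn']
  field_simp [(Xi_pos ℓ a).ne']

lemma Xi_mul_Temp_add_sqrt_mul_Pot {n : ℕ} (hn : 3 ≤ n) {ℓ r : ℝ} (hℓ : ℓ ≠ 0) (hr : r ≠ 0)
    (a q : ℝ) :
    Xi ℓ a * (4 * π * Temp n ℓ r a q * r ^ (n - 1) +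
      4 * √(((n : ℝ) - 1) * ((n : ℝ) - 2) / 2) * Pot n ℓ r a q * q) = n * mMass n ℓ r q := by
  rw [mul_add, show ∀ x y : ℝ, Xi ℓ a * (4 * x * y * q) = 4 * q * (Xi ℓ a * x * y) by
    intros; ring, Xi_mul_sqrt_mul_Pot hn]
  obtain ⟨k, rfl⟩ := Nat.exists_eq_add_of_le' hn
  simp only [Temp, mMass, show 2 * (k + 3) - 2 = 2 * k + 4 by omega,
    show 2 * (k + 3) - 3 = 2 * k + 3 by omega, show k + 3 - 1 = k + 2 by omega,
    show k + 3 - 2 = k + 1 by omega]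
  have := Xi_pos ℓ a
  push_cast
  field_simp
  ring

lemma hasDerivAt_mMass_charge (n : ℕ) (ℓ r q : ℝ) :
    HasDerivAt (fun q => mMass n ℓ r q) (2 * q / r ^ (n - 2)) q := by
  have h := ((hasDerivAt_pow 2 q).div_const (r ^ (n - 2))).const_add (r ^ n / ℓ ^ 2)
  refine HasDerivAt.congr_deriv (f := fun q => mMass n ℓ r q) h ?_
  simp

variable {n : ℕ} {ℓ r : ℝ} (V a q : ℝ)

theorem first_law_radius (hn : 2 ≤ n) (hℓ : ℓ ≠ 0) (hr : r ≠ 0) :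
    deriv (fun r => Mmass n ℓ V r a q) r =
      Temp n ℓ r a q * deriv (fun r => Sent n ℓ V r a) r +
      Omg ℓ a * deriv (fun r => Jang n ℓ V r a q) r +
      Pot n ℓ r a q * deriv (fun _ => Qch n ℓ V a q) r := by
  have hm := hasDerivAt_mMass_radius ℓ q hn hr
  have hM : HasDerivAt (fun r => Mmass n ℓ V r a q) _ r :=
    (hm.const_mul (V / (16 * π))).mul_const (n * Xi ℓ a ^ 2 - 1)
  have hS : HasDerivAt (fun r => Sent n ℓ V r a) _ r :=
    (hasDerivAt_pow (n - 1) r).const_mul (Xi ℓ a * V / 4)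
  have hJ : HasDerivAt (fun r => Jang n ℓ V r a q) _ r :=
    (hm.const_mul (V / (16 * π) * n * Xi ℓ a)).mul_const a
  rw [hM.deriv, hS.deriv, hJ.deriv, deriv_const, Nat.cast_sub (by omega : 1 ≤ n),
    Nat.sub_sub, Nat.cast_one]
  linear_combination (V / (16 * π) * n * (n * r ^ (n - 1) / ℓ ^ 2 - (n - 2) * q ^ 2 / r ^ (n - 1)))
      * Xi_mul_sub_Omg_mul ℓ a - (V / 4 * (n - 1)) * Xi_mul_Temp_mul_pow ℓ a q hn hℓ hr

theorem first_law_rotation (hn : 3 ≤ n) (hℓ : ℓ ≠ 0) (hr : r ≠ 0) :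
    deriv (fun a => Mmass n ℓ V r a q) a =
      Temp n ℓ r a q * deriv (fun a => Sent n ℓ V r a) a +
      Omg ℓ a * deriv (fun a => Jang n ℓ V r a q) a +
      Pot n ℓ r a q * deriv (fun a => Qch n ℓ V a q) a := by
  have hΞ := hasDerivAt_Xi ℓ a
  have hM : HasDerivAt (fun a => Mmass n ℓ V r a q) _ a :=
    (((hΞ.pow 2).const_mul (n : ℝ)).sub_const 1).const_mul (V / (16 * π) * mMass n ℓ r q)
  have hS : HasDerivAt (fun a => Sent n ℓ V r a) _ a :=
    ((hΞ.mul_const V).div_const 4).mul_const (r ^ (n - 1))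
  have hJ : HasDerivAt (fun a => Jang n ℓ V r a q) _ a :=
    ((hΞ.const_mul (V / (16 * π) * n)).mul_const (mMass n ℓ r q)).mul (hasDerivAt_id a)
  have hQ : HasDerivAt (fun a => Qch n ℓ V a q) _ a :=
    (((hΞ.mul_const V).div_const (4 * π)).mul_const
      √(((n : ℝ) - 1) * ((n : ℝ) - 2) / 2)).mul_const q
  rw [hM.deriv, hS.deriv, hJ.deriv, hQ.deriv]
  have hsmarr : 4 * π * Temp n ℓ r a q * r ^ (n - 1) +
      4 * √(((n : ℝ) - 1) * ((n : ℝ) - 2) / 2) * Pot n ℓ r a q * q =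
        n * mMass n ℓ r q * (Xi ℓ a - Omg ℓ a * a) :=
    mul_left_cancel₀ (Xi_pos ℓ a).ne' <| by
      linear_combination Xi_mul_Temp_add_sqrt_mul_Pot hn hℓ hr a q -
        n * mMass n ℓ r q * Xi_mul_sub_Omg_mul ℓ a
  -- the coefficient carries `1/π`, which `ring` cannot cancel against the `π` in `hsmarr`
  linear_combination (norm := skip) (-(Omg ℓ a * V / (16 * π))) * hsmarr
  field_simp
  ring

theorem first_law_charge (hn : 3 ≤ n) :
    deriv (fun q => Mmass n ℓ V r a q) q =
      Temp n ℓ r a q * deriv (fun _ => Sent n ℓ V r a) q +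
      Omg ℓ a * deriv (fun q => Jang n ℓ V r a q) q +
      Pot n ℓ r a q * deriv (fun q => Qch n ℓ V a q) q := by
  have hm := hasDerivAt_mMass_charge n ℓ r q
  have hM : HasDerivAt (fun q => Mmass n ℓ V r a q) _ q :=
    (hm.const_mul (V / (16 * π))).mul_const (n * Xi ℓ a ^ 2 - 1)
  have hJ : HasDerivAt (fun q => Jang n ℓ V r a q) _ q :=
    (hm.const_mul (V / (16 * π) * n * Xi ℓ a)).mul_const a
  have hQ : HasDerivAt (fun q => Qch n ℓ V a q) _ q :=
    (hasDerivAt_id' q).const_mul (Xi ℓ a * V / (4 * π) * √(((n : ℝ) - 1) * ((n : ℝ) - 2) / 2))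
  rw [hM.deriv, hJ.deriv, hQ.deriv, deriv_const]
  linear_combination (V / (16 * π) * n * (2 * q / r ^ (n - 2))) * Xi_mul_sub_Omg_mul ℓ a -
    (V / (4 * π)) * Xi_mul_sqrt_mul_Pot hn ℓ r a q

theorem black_brane_first_law_general
    (n : ℕ) (hn : 3 ≤ n) (ℓ V rp a q : ℝ)
    (hℓ : 0 < ℓ) (hrp : 0 < rp) :
    (deriv (fun r => Mmass n ℓ V r a q) rp =
        Temp n ℓ rp a q * deriv (fun r => Sent n ℓ V r a) rp +
        Omg ℓ a * deriv (fun r => Jang n ℓ V r a q) rp +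
        Pot n ℓ rp a q * deriv (fun r => Qch n ℓ V a q) rp) ∧
    (deriv (fun a' => Mmass n ℓ V rp a' q) a =
        Temp n ℓ rp a q * deriv (fun a' => Sent n ℓ V rp a') a +
        Omg ℓ a * deriv (fun a' => Jang n ℓ V rp a' q) a +
        Pot n ℓ rp a q * deriv (fun a' => Qch n ℓ V a' q) a) ∧
    (deriv (fun q' => Mmass n ℓ V rp a q') q =
        Temp n ℓ rp a q * deriv (fun q' => Sent n ℓ V rp a) q +
        Omg ℓ a * deriv (fun q' => Jang n ℓ V rp a q') q +
        Pot n ℓ rp a q * deriv (fun q' => Qch n ℓ V a q') q) :=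
  ⟨first_law_radius V a q (by omega) hℓ.ne' hrp.ne',
    first_law_rotation V a q hn hℓ.ne' hrp.ne',
    first_law_charge V a q hn⟩

/-- the differential first law dM = T dS + Ω dJ + Φ dQ for the
(n+1)-dimensional AAdS charged rotating black brane with one rotation
parameter: regarding M, S, J, Q as smooth functions of the parameters
(r₊, a, q), the 1-form dM − T dS − Ω dJ − Φ dQ vanishes identically, i.e.
the partial derivatives with respect to each of r₊, a, q satisfy the first
law. -/
theorem black_brane_first_law
    (n : ℕ) (hn : 3 ≤ n) (ℓ V rp a q : ℝ)
    (hℓ : 0 < ℓ) (hV : 0 < V) (hrp : 0 < rp) :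
    (deriv (fun r => Mmass n ℓ V r a q) rp =
        Temp n ℓ rp a q * deriv (fun r => Sent n ℓ V r a) rp +
        Omg ℓ a * deriv (fun r => Jang n ℓ V r a q) rp +
        Pot n ℓ rp a q * deriv (fun r => Qch n ℓ V a q) rp) ∧
    (deriv (fun a' => Mmass n ℓ V rp a' q) a =
        Temp n ℓ rp a q * deriv (fun a' => Sent n ℓ V rp a') a +
        Omg ℓ a * deriv (fun a' => Jang n ℓ V rp a' q) a +
        Pot n ℓ rp a q * deriv (fun a' => Qch n ℓ V a' q) a) ∧
    (deriv (fun q' => Mmass n ℓ V rp a q') q =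
        Temp n ℓ rp a q * deriv (fun q' => Sent n ℓ V rp a) q +
        Omg ℓ a * deriv (fun q' => Jang n ℓ V rp a q') q +
        Pot n ℓ rp a q * deriv (fun q' => Qch n ℓ V a q') q) :=
  black_brane_first_law_general n hn ℓ V rp a q hℓ hrp
end
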